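/- arXiv:2506.14108 — 4 statements merged into one kernel-verified Lean document; each statement's English description precedes it below -/
import Mathlib

section
/- Let LD(β₁),…,LD(β_b) be real numbers (the sample β-local depth values) and define ILD(β_i) = (1/i)·Σ_{j=1}^{i} LD(β_j) (the uniformly-weighted β-integrated local depth). If Δ = max_{1<i≤b} |LD(β_i) − LD(β_{i−1})| is the maximum jump between successive local depth values, then max_{1<i≤b} |ILD(β_i) − ILD(β_{i−1})| ≤ Δ/2. -/
/-!
Writing `S n = ∑_{j=1}^n (LD (n+1) - LD j)`, one has `ILD (n+1) - ILD n = S n / (n (n+1))`, and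
summation by parts gives `S n = ∑_{k=1}^n k (LD (k+1) - LD k)`. Each jump is at most `Δ` in absolute
value and `∑_{k=1}^n k = n (n+1) / 2`, so `|S n| ≤ n (n+1) Δ / 2`.
-/

open Finset

theorem Finset.sum_Icc_one_natCast (n : ℕ) : ∑ k ∈ Icc 1 n, (k : ℝ) = n * (n + 1) / 2 := by
  induction n with
  | zero => simp
  | succ n ih =>
    rw [sum_Icc_succ_top (by omega), ih]
    push_cast
    ring

theorem Finset.sum_Icc_sub_eq_sum_Icc_nsmul_sub {G : Type*} [AddCommGroup G] (f : ℕ → G) (n : ℕ) :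
    ∑ j ∈ Icc 1 n, (f (n + 1) - f j) = ∑ k ∈ Icc 1 n, k • (f (k + 1) - f k) := by
  induction n with
  | zero => simp
  | succ n ih =>
    rw [sum_Icc_succ_top (by omega), sum_Icc_succ_top (by omega), ← ih,
      sum_congr rfl fun j _ => (sub_add_sub_cancel (f (n + 1 + 1)) (f (n + 1)) (f j)).symm,
      sum_add_distrib, sum_const, Nat.card_Icc, Nat.add_sub_cancel, succ_nsmul]
    abel

noncomputable def runningMean (f : ℕ → ℝ) (n : ℕ) : ℝ :=
  (∑ j ∈ Icc 1 n, f j) / n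

theorem runningMean_succ_sub (f : ℕ → ℝ) {n : ℕ} (hn : n ≠ 0) :
    runningMean f (n + 1) - runningMean f n
      = (∑ j ∈ Icc 1 n, (f (n + 1) - f j)) / ((n + 1) * n) := by
  unfold runningMean
  rw [sum_Icc_succ_top (by omega), sum_sub_distrib, sum_const, Nat.card_Icc, nsmul_eq_mul]
  field_simp
  push_cast
  ring

theorem abs_runningMean_succ_sub_le (f : ℕ → ℝ) {n : ℕ} (hn : n ≠ 0) {Δ : ℝ}
    (hf : ∀ k ∈ Icc 1 n, |f (k + 1) - f k| ≤ Δ) :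
    |runningMean f (n + 1) - runningMean f n| ≤ Δ / 2 := by
  have hpos : (0 : ℝ) < (n + 1) * n := by positivity
  have hsum : |∑ k ∈ Icc 1 n, k • (f (k + 1) - f k)| ≤ (n + 1) * n * (Δ / 2) :=
    calc |∑ k ∈ Icc 1 n, k • (f (k + 1) - f k)|
        ≤ ∑ k ∈ Icc 1 n, (k : ℝ) * |f (k + 1) - f k| := by
          simpa only [nsmul_eq_mul, abs_mul, Nat.abs_cast] using abs_sum_le_sum_abs (fun k => k • (f (k + 1) - f k)) (Icc 1 n)
      _ ≤ ∑ k ∈ Icc 1 n, (k : ℝ) * Δ :=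
          sum_le_sum fun k hk => mul_le_mul_of_nonneg_left (hf k hk) k.cast_nonneg
      _ = (n + 1) * n * (Δ / 2) := by
          rw [← sum_mul, sum_Icc_one_natCast]
          ring
  rw [runningMean_succ_sub f hn, sum_Icc_sub_eq_sum_Icc_nsmul_sub, abs_div, abs_of_pos hpos,
    div_le_iff₀ hpos, mul_comm]
  exact hsum

theorem ild_adjacent_jump_le_half_general (b : ℕ) (LD : ℕ → ℝ) (Δ : ℝ)
    (ILD : ℕ → ℝ)
    (hILD : ∀ i, 1 ≤ i → ILD i = (∑ j ∈ Finset.Icc 1 i, LD j) / i)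
    (hΔ : ∀ i, 2 ≤ i → i ≤ b → |LD i - LD (i - 1)| ≤ Δ) :
    ∀ i, 2 ≤ i → i ≤ b → |ILD i - ILD (i - 1)| ≤ Δ / 2 := by
  intro i hi hib
  obtain ⟨n, rfl⟩ : ∃ n, i = n + 1 := ⟨i - 1, by omega⟩
  rw [Nat.add_sub_cancel, hILD (n + 1) (by omega), hILD n (by omega)]
  refine abs_runningMean_succ_sub_le LD (by omega) fun k hk => ?_
  have hk := mem_Icc.mp hk
  simpa using hΔ (k + 1) (by omega) (by omega)

/-- Proposition 1, first inequality: the maximal jump between successive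
uniformly-weighted integrated local depth values is at most half the maximal
jump between successive local depth values. -/
theorem ild_adjacent_jump_le_half (b : ℕ) (hb : 2 ≤ b) (LD : ℕ → ℝ) (Δ : ℝ)
    (ILD : ℕ → ℝ)
    (hILD : ∀ i, 1 ≤ i → ILD i = (∑ j ∈ Finset.Icc 1 i, LD j) / i)
    (hΔ : ∀ i, 2 ≤ i → i ≤ b → |LD i - LD (i - 1)| ≤ Δ) :
    ∀ i, 2 ≤ i → i ≤ b → |ILD i - ILD (i - 1)| ≤ Δ / 2 :=
  ild_adjacent_jump_le_half_general b LD Δ ILD hILD hΔ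
end

section
/- Let P be a probability measure on ℝ^d with D(x | P) → 0 as ‖x‖ → ∞, where D is halfspace depth. Then for every fixed β ∈ (0,1], the local depth LD^β(x | P) = D(x | P restricted to a measurable set R_x with P(R_x) ≥ β and renormalized) also tends to 0 as ‖x‖ → ∞. -/
/-!
Conditioning `P` on a set of mass at least `β` multiplies the mass of every set by at most
`β⁻¹`, so `P[|R x] ≤ β⁻¹ • P` as measures. Halfspace depth is monotone in the measure and
commutes with scalar multiplication, hence the local depth at `x` is at most `β⁻¹` times the
global depth at `x`, which tends to `0`.
-/

open MeasureTheory ENNReal Filter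

/-- Halfspace (Tukey) depth of `x` with respect to `Q`. -/
noncomputable def halfspaceDepth {d : ℕ} (Q : Measure (EuclideanSpace ℝ (Fin d)))
    (x : EuclideanSpace ℝ (Fin d)) : ℝ≥0∞ :=
  ⨅ (u : EuclideanSpace ℝ (Fin d)) (_ : u ≠ 0),
    Q {z | inner ℝ u z ≤ (inner ℝ u x : ℝ)}

open ProbabilityTheory

theorem ProbabilityTheory.cond_le_inv_smul {Ω : Type*} [MeasurableSpace Ω] (μ : Measure Ω)
    {s : Set Ω} {β : ℝ≥0∞} (hβ : β ≤ μ s) : μ[|s] ≤ β⁻¹ • μ :=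
  fun t => mul_le_mul' (ENNReal.inv_le_inv.2 hβ) (Measure.restrict_le_self t)

section HalfspaceDepth

variable {d : ℕ}

theorem halfspaceDepth_mono {Q Q' : Measure (EuclideanSpace ℝ (Fin d))} (h : Q ≤ Q')
    (x : EuclideanSpace ℝ (Fin d)) : halfspaceDepth Q x ≤ halfspaceDepth Q' x :=
  iInf₂_mono fun _ _ => h _

theorem halfspaceDepth_smul (Q : Measure (EuclideanSpace ℝ (Fin d))) {c : ℝ≥0∞} (hc₀ : c ≠ 0)
    (hc : c ≠ ∞) (x : EuclideanSpace ℝ (Fin d)) :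
    halfspaceDepth (c • Q) x = c * halfspaceDepth Q x := by
  simp only [halfspaceDepth, Measure.smul_apply, smul_eq_mul, ENNReal.mul_iInf_of_ne hc₀ hc]

theorem halfspaceDepth_cond_le (P : Measure (EuclideanSpace ℝ (Fin d)))
    {S : Set (EuclideanSpace ℝ (Fin d))} {β : ℝ≥0∞} (hβ₀ : β ≠ 0) (hβ : β ≠ ∞) (hβS : β ≤ P S)
    (x : EuclideanSpace ℝ (Fin d)) :
    halfspaceDepth P[|S] x ≤ β⁻¹ * halfspaceDepth P x :=
  calc halfspaceDepth P[|S] x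
      ≤ halfspaceDepth (β⁻¹ • P) x := halfspaceDepth_mono (cond_le_inv_smul P hβS) x
    _ = β⁻¹ * halfspaceDepth P x :=
      halfspaceDepth_smul P (ENNReal.inv_ne_zero.2 hβ) (ENNReal.inv_ne_top.2 hβ₀) x

end HalfspaceDepth

theorem local_halfspaceDepth_vanishes_at_infinity_general {d : ℕ}
    (P : Measure (EuclideanSpace ℝ (Fin d))) [IsProbabilityMeasure P]
    (hP : Tendsto (fun x => halfspaceDepth P x)
      (Filter.comap (fun x : EuclideanSpace ℝ (Fin d) => ‖x‖) atTop) (nhds 0))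
    (β : ℝ≥0∞) (hβ0 : 0 < β)
    (R : EuclideanSpace ℝ (Fin d) → Set (EuclideanSpace ℝ (Fin d)))
    (hRβ : ∀ x, β ≤ P (R x)) :
    Tendsto (fun x => halfspaceDepth ((P (R x))⁻¹ • P.restrict (R x)) x)
      (Filter.comap (fun x : EuclideanSpace ℝ (Fin d) => ‖x‖) atTop) (nhds 0) := by
  have hβ : β ≠ ∞ := ne_top_of_le_ne_top (measure_ne_top P _) (hRβ 0)
  have hbound : Tendsto (fun x => β⁻¹ * halfspaceDepth P x)
      (Filter.comap (fun x : EuclideanSpace ℝ (Fin d) => ‖x‖) atTop) (nhds 0) := by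
    simpa using ENNReal.Tendsto.const_mul hP (Or.inr (ENNReal.inv_ne_top.2 hβ0.ne'))
  exact tendsto_of_tendsto_of_tendsto_of_le_of_le tendsto_const_nhds hbound
    (fun _ => bot_le) fun x => halfspaceDepth_cond_le P hβ0.ne' hβ (hRβ x) x

/-- If the global halfspace depth vanishes at infinity, then so does the
`β`-local halfspace depth, computed with respect to `P` conditioned on regions
`R x` of `P`-mass at least `β`. -/
theorem local_halfspaceDepth_vanishes_at_infinity {d : ℕ}
    (P : Measure (EuclideanSpace ℝ (Fin d))) [IsProbabilityMeasure P]
    (hP : Tendsto (fun x => halfspaceDepth P x)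
      (Filter.comap (fun x : EuclideanSpace ℝ (Fin d) => ‖x‖) atTop) (nhds 0))
    (β : ℝ≥0∞) (hβ0 : 0 < β) (hβ1 : β ≤ 1)
    (R : EuclideanSpace ℝ (Fin d) → Set (EuclideanSpace ℝ (Fin d)))
    (hRmeas : ∀ x, MeasurableSet (R x)) (hRβ : ∀ x, β ≤ P (R x)) :
    Tendsto (fun x => halfspaceDepth ((P (R x))⁻¹ • P.restrict (R x)) x)
      (Filter.comap (fun x : EuclideanSpace ℝ (Fin d) => ‖x‖) atTop) (nhds 0) :=
  local_halfspaceDepth_vanishes_at_infinity_general P hP β hβ0 R hRβ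
end

section
/- Let h : ℝ^d × ℝ^d → [0,∞) be measurable with the property that for P-almost every y, h(y,x) → ∞ as ‖x‖ → ∞. Let P be a probability measure on ℝ^d, fix β ∈ (0,1], and for each x let R_x be a measurable set with P(R_x) ≥ β. Define the local Type B depth LD^β(x) = 1/(1 + E_{y∼P_{R_x}}[h(y,x)]), where P_{R_x} is P restricted to R_x and renormalized. Then LD^β(x) → 0 as ‖x‖ → ∞. -/
/-!
If `h(·, x) → ∞` almost surely, then for each finite level `C` the mass `P {y | h(y,x) < C}` tends
to `0` (a.e. convergence implies convergence in measure for a finite measure). By Markov's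
inequality `∫_{R x} h(·,x) dP ≥ C (P(R x) - P {h(·,x) < C}) ≥ C (β - o(1))`, and `C` is arbitrary,
so the integral over `R x` tends to `∞`. Renormalizing by `P(R x)⁻¹ ≥ 1` only increases it, and
`(1 + t)⁻¹ → 0` as `t → ∞`.
-/

open MeasureTheory ENNReal Filter Topology

namespace MeasureTheory

variable {α ι : Type*} [MeasurableSpace α] {μ : Measure α}

theorem tendsto_measure_setOf_lt_of_ae_tendsto_top [IsFiniteMeasure μ] {l : Filter ι}
    [l.IsCountablyGenerated] {F : ι → α → ℝ≥0∞} (hF : ∀ i, Measurable (F i))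
    (hlim : ∀ᵐ y ∂μ, Tendsto (fun i => F i y) l (𝓝 ⊤)) {C : ℝ≥0∞} (hC : C ≠ ⊤) :
    Tendsto (fun i => μ {y | F i y < C}) l (𝓝 0) := by
  have hleaves : ∀ᵐ y ∂μ, ∀ᶠ i in l, y ∈ {y | F i y < C} ↔ y ∈ (∅ : Set α) := by
    filter_upwards [hlim] with y hy
    filter_upwards [hy.eventually (lt_mem_nhds hC.lt_top)] with i hi
    simpa using hi.le
  simpa using tendsto_measure_of_ae_tendsto_indicator_of_isFiniteMeasure l
    MeasurableSet.empty (fun i => measurableSet_lt (hF i) measurable_const) hleaves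

theorem mul_measure_sub_measure_setOf_lt_le_setLIntegral {f : α → ℝ≥0∞} (hf : Measurable f)
    (s : Set α) (C : ℝ≥0∞) :
    C * (μ s - μ {y | f y < C}) ≤ ∫⁻ y in s, f y ∂μ := by
  have hsplit : μ s ≤ μ.restrict s {y | C ≤ f y} + μ {y | f y < C} :=
    calc μ s = μ.restrict s Set.univ := (Measure.restrict_apply_univ s).symm
      _ ≤ μ.restrict s ({y | C ≤ f y} ∪ {y | f y < C}) :=
          measure_mono fun y _ => le_or_gt C (f y)
      _ ≤ μ.restrict s {y | C ≤ f y} + μ.restrict s {y | f y < C} := measure_union_le _ _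
      _ ≤ μ.restrict s {y | C ≤ f y} + μ {y | f y < C} :=
          add_le_add_right (Measure.restrict_apply_le _ _) _
  calc C * (μ s - μ {y | f y < C}) ≤ C * μ.restrict s {y | C ≤ f y} := by
        gcongr; exact tsub_le_iff_right.mpr hsplit
    _ ≤ ∫⁻ y in s, f y ∂μ := mul_meas_ge_le_lintegral₀ hf.aemeasurable C

theorem tendsto_setLIntegral_top_of_ae_tendsto_top [IsFiniteMeasure μ] {l : Filter ι}
    [l.IsCountablyGenerated] {F : ι → α → ℝ≥0∞} (hF : ∀ i, Measurable (F i))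
    (hlim : ∀ᵐ y ∂μ, Tendsto (fun i => F i y) l (𝓝 ⊤)) {s : ι → Set α} {β : ℝ≥0∞}
    (hβ : β ≠ 0) (hs : ∀ i, β ≤ μ (s i)) :
    Tendsto (fun i => ∫⁻ y in s i, F i y ∂μ) l (𝓝 ⊤) := by
  rw [ENNReal.tendsto_nhds_top_iff_nnreal]
  intro M
  obtain ⟨n, hn⟩ := ENNReal.exists_nat_mul_gt hβ (coe_ne_top : (M : ℝ≥0∞) ≠ ⊤)
  have hlower : Tendsto (fun i => (n : ℝ≥0∞) * (β - μ {y | F i y < n})) l (𝓝 (n * β)) := by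
    simpa using ENNReal.Tendsto.const_mul (ENNReal.Tendsto.sub tendsto_const_nhds
      (tendsto_measure_setOf_lt_of_ae_tendsto_top hF hlim (natCast_ne_top n)) (by simp))
      (Or.inr (natCast_ne_top n))
  filter_upwards [hlower.eventually (lt_mem_nhds hn)] with i hi
  calc (M : ℝ≥0∞) < n * (β - μ {y | F i y < n}) := hi
    _ ≤ n * (μ (s i) - μ {y | F i y < n}) := by gcongr; exact hs i
    _ ≤ ∫⁻ y in s i, F i y ∂μ := mul_measure_sub_measure_setOf_lt_le_setLIntegral (hF i) _ _

end MeasureTheory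

theorem local_typeB_depth_vanishes_at_infinity_general {d : ℕ}
    (P : Measure (EuclideanSpace ℝ (Fin d))) [IsProbabilityMeasure P]
    (h : EuclideanSpace ℝ (Fin d) → EuclideanSpace ℝ (Fin d) → ℝ≥0∞)
    (hmeas : Measurable fun p : EuclideanSpace ℝ (Fin d) × EuclideanSpace ℝ (Fin d) =>
      h p.1 p.2)
    (htends : ∀ᵐ y ∂P, Tendsto (fun x => h y x)
      (Filter.comap (fun x : EuclideanSpace ℝ (Fin d) => ‖x‖) atTop) (nhds ⊤))
    (β : ℝ≥0∞) (hβ0 : 0 < β)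
    (R : EuclideanSpace ℝ (Fin d) → Set (EuclideanSpace ℝ (Fin d)))
    (hRβ : ∀ x, β ≤ P (R x)) :
    Tendsto (fun x => (1 + ∫⁻ y, h y x ∂((P (R x))⁻¹ • P.restrict (R x)))⁻¹)
      (Filter.comap (fun x : EuclideanSpace ℝ (Fin d) => ‖x‖) atTop) (nhds 0) := by
  have hrestricted : Tendsto (fun x => ∫⁻ y in R x, h y x ∂P)
      (comap (fun x : EuclideanSpace ℝ (Fin d) => ‖x‖) atTop) (𝓝 ⊤) :=
    tendsto_setLIntegral_top_of_ae_tendsto_top (fun x => hmeas.comp measurable_prodMk_right)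
      htends hβ0.ne' hRβ
  have hnormalized : Tendsto (fun x => ∫⁻ y, h y x ∂((P (R x))⁻¹ • P.restrict (R x)))
      (comap (fun x : EuclideanSpace ℝ (Fin d) => ‖x‖) atTop) (𝓝 ⊤) :=
    tendsto_nhds_top_mono' hrestricted fun x => by
      rw [lintegral_smul_measure, smul_eq_mul]
      exact le_mul_of_one_le_left' (ENNReal.one_le_inv.mpr prob_le_one)
  simpa using tendsto_inv_iff.mpr (tendsto_const_nhds (x := (1 : ℝ≥0∞)).add hnormalized)

/-- The local Type B depth `1/(1 + E_{P_{R_x}}[h(y,x)])` vanishes at infinity,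
provided `h(y,·)` tends to infinity for `P`-almost every `y` and the
conditioning regions `R x` all carry `P`-mass at least `β > 0`. -/
theorem local_typeB_depth_vanishes_at_infinity {d : ℕ}
    (P : Measure (EuclideanSpace ℝ (Fin d))) [IsProbabilityMeasure P]
    (h : EuclideanSpace ℝ (Fin d) → EuclideanSpace ℝ (Fin d) → ℝ≥0∞)
    (hmeas : Measurable fun p : EuclideanSpace ℝ (Fin d) × EuclideanSpace ℝ (Fin d) =>
      h p.1 p.2)
    (htends : ∀ᵐ y ∂P, Tendsto (fun x => h y x)
      (Filter.comap (fun x : EuclideanSpace ℝ (Fin d) => ‖x‖) atTop) (nhds ⊤))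
    (β : ℝ≥0∞) (hβ0 : 0 < β) (hβ1 : β ≤ 1)
    (R : EuclideanSpace ℝ (Fin d) → Set (EuclideanSpace ℝ (Fin d)))
    (hRmeas : ∀ x, MeasurableSet (R x)) (hRβ : ∀ x, β ≤ P (R x)) :
    Tendsto (fun x => (1 + ∫⁻ y, h y x ∂((P (R x))⁻¹ • P.restrict (R x)))⁻¹)
      (Filter.comap (fun x : EuclideanSpace ℝ (Fin d) => ‖x‖) atTop) (nhds 0) :=
  local_typeB_depth_vanishes_at_infinity_general P h hmeas htends β hβ0 R hRβ
end

section
/- Let P be an absolutely continuous probability measure on ℝ^d such that its spatial depth vanishes at infinity, i.e., ‖E_{y∼P}[(y−x)/‖y−x‖]‖ → 1 as ‖x‖ → ∞. Fix β ∈ (0,1] and for each x let R_x be measurable with P(R_x) = β. Then the local spatial depth LD^β(x) = 1 − ‖E_{y∼P_{R_x}}[(y−x)/‖y−x‖]‖ also tends to 0 as ‖x‖ → ∞. -/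
/-!
Write `g_x(y) = ‖y - x‖⁻¹ • (y - x)` for the unit vector from `x` to `y`; it has norm at most `1`.
Splitting `∫ g_x ∂P` over `R x` and its complement, the complement contributes at most
`P (R x)ᶜ = 1 - β`, so `‖∫ g_x ∂P_{R x}‖ ≥ β⁻¹ (‖∫ g_x ∂P‖ - (1 - β))`. Hence the local depth
lies between `0` and `β⁻¹` times the global depth, which tends to `0`.
-/

open MeasureTheory ENNReal Filter ProbabilityTheory

section BoundedIntegrand

variable {α E : Type*} [MeasurableSpace α] [NormedAddCommGroup E] [NormedSpace ℝ E]
  {μ : Measure α} {f : α → E}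

lemma norm_integral_sub_measureReal_compl_le_norm_setIntegral [IsFiniteMeasure μ]
    (hf : Integrable f μ) (hf1 : ∀ a, ‖f a‖ ≤ 1) {s : Set α} (hs : MeasurableSet s) :
    ‖∫ a, f a ∂μ‖ - μ.real sᶜ ≤ ‖∫ a in s, f a ∂μ‖ := by
  have hcompl : ‖∫ a in sᶜ, f a ∂μ‖ ≤ μ.real sᶜ := by
    simpa using norm_setIntegral_le_of_norm_le_const (measure_lt_top μ sᶜ) fun a _ => hf1 a
  calc ‖∫ a, f a ∂μ‖ - μ.real sᶜ
      ≤ ‖∫ a in s, f a ∂μ‖ + ‖∫ a in sᶜ, f a ∂μ‖ - μ.real sᶜ := by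
        rw [← integral_add_compl hs hf]
        gcongr
        exact norm_add_le _ _
    _ ≤ ‖∫ a in s, f a ∂μ‖ := by linarith

lemma norm_integral_cond (s : Set α) :
    ‖∫ a, f a ∂μ[|s]‖ = (μ.real s)⁻¹ * ‖∫ a in s, f a ∂μ‖ := by
  rw [ProbabilityTheory.cond, integral_smul_measure, norm_smul, toReal_inv,
    Real.norm_of_nonneg (by positivity)]
  rfl

lemma one_sub_norm_integral_cond_le [IsProbabilityMeasure μ] (hf : AEStronglyMeasurable f μ)
    (hf1 : ∀ a, ‖f a‖ ≤ 1) {s : Set α} (hs : MeasurableSet s) (hμs : 0 < μ.real s) :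
    1 - ‖∫ a, f a ∂μ[|s]‖ ≤ (μ.real s)⁻¹ * (1 - ‖∫ a, f a ∂μ‖) := by
  have hlow := norm_integral_sub_measureReal_compl_le_norm_setIntegral
    (.of_bound hf 1 (.of_forall hf1)) hf1 hs
  rw [measureReal_compl hs, probReal_univ] at hlow
  calc 1 - ‖∫ a, f a ∂μ[|s]‖ = (μ.real s)⁻¹ * (μ.real s - ‖∫ a in s, f a ∂μ‖) := by
        rw [norm_integral_cond]; field_simp
    _ ≤ (μ.real s)⁻¹ * (1 - ‖∫ a, f a ∂μ‖) :=
        mul_le_mul_of_nonneg_left (by linarith) (by positivity)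

lemma norm_integral_cond_le_one [IsFiniteMeasure μ] (hf1 : ∀ a, ‖f a‖ ≤ 1) {s : Set α}
    (hμs : μ s ≠ 0) : ‖∫ a, f a ∂μ[|s]‖ ≤ 1 := by
  have := cond_isProbabilityMeasure hμs
  simpa using norm_integral_le_of_norm_le_const (μ := μ[|s]) (.of_forall hf1)

end BoundedIntegrand

lemma norm_inv_norm_smul_le_one {E : Type*} [NormedAddCommGroup E] [NormedSpace ℝ E] (v : E) :
    ‖‖v‖⁻¹ • v‖ ≤ 1 := by
  simpa using inv_norm_smul_mem_unitClosedBall v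

theorem local_spatial_depth_vanishes_at_infinity_general {d : ℕ}
    (P : Measure (EuclideanSpace ℝ (Fin d))) [IsProbabilityMeasure P]
    (hglobal : Tendsto (fun x => ‖∫ y, ‖y - x‖⁻¹ • (y - x) ∂P‖)
      (Filter.comap (fun x : EuclideanSpace ℝ (Fin d) => ‖x‖) atTop) (nhds 1))
    (β : ℝ) (hβ0 : 0 < β)
    (R : EuclideanSpace ℝ (Fin d) → Set (EuclideanSpace ℝ (Fin d)))
    (hRmeas : ∀ x, MeasurableSet (R x))
    (hRβ : ∀ x, (P (R x)).toReal = β) :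
    Tendsto
      (fun x => 1 - ‖∫ y, ‖y - x‖⁻¹ • (y - x) ∂((P (R x))⁻¹ • P.restrict (R x))‖)
      (Filter.comap (fun x : EuclideanSpace ℝ (Fin d) => ‖x‖) atTop) (nhds 0) := by
  have hunit (x : EuclideanSpace ℝ (Fin d)) :
      AEStronglyMeasurable (fun y : EuclideanSpace ℝ (Fin d) => ‖y - x‖⁻¹ • (y - x)) P := by
    fun_prop
  have hβ (x : EuclideanSpace ℝ (Fin d)) : P.real (R x) = β := hRβ x
  refine squeeze_zero (g := fun x => β⁻¹ * (1 - ‖∫ y, ‖y - x‖⁻¹ • (y - x) ∂P‖)) (fun x => ?_)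
    (fun x => ?_) ?_
  · exact sub_nonneg.mpr <| norm_integral_cond_le_one (fun y => norm_inv_norm_smul_le_one _)
      (by simp [← measureReal_ne_zero_iff, hβ x, hβ0.ne'])
  · rw [← hβ x]
    exact one_sub_norm_integral_cond_le (hunit x) (fun y => norm_inv_norm_smul_le_one _)
      (hRmeas x) (by rwa [hβ x])
  · simpa using ((tendsto_const_nhds (x := 1)).sub hglobal).const_mul β⁻¹

/-- If the (global) spatial depth of an absolutely continuous probability
measure vanishes at infinity, then so does the local spatial depth computed
from conditioning regions of mass exactly `β`. -/
theorem local_spatial_depth_vanishes_at_infinity {d : ℕ}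
    (P : Measure (EuclideanSpace ℝ (Fin d))) [IsProbabilityMeasure P]
    (hac : P ≪ volume)
    (hglobal : Tendsto (fun x => ‖∫ y, ‖y - x‖⁻¹ • (y - x) ∂P‖)
      (Filter.comap (fun x : EuclideanSpace ℝ (Fin d) => ‖x‖) atTop) (nhds 1))
    (β : ℝ) (hβ0 : 0 < β) (hβ1 : β ≤ 1)
    (R : EuclideanSpace ℝ (Fin d) → Set (EuclideanSpace ℝ (Fin d)))
    (hRmeas : ∀ x, MeasurableSet (R x))
    (hRβ : ∀ x, (P (R x)).toReal = β) :
    Tendsto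
      (fun x => 1 - ‖∫ y, ‖y - x‖⁻¹ • (y - x) ∂((P (R x))⁻¹ • P.restrict (R x))‖)
      (Filter.comap (fun x : EuclideanSpace ℝ (Fin d) => ‖x‖) atTop) (nhds 0) :=
  local_spatial_depth_vanishes_at_infinity_general P hglobal β hβ0 R hRmeas hRβ
end
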